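/- Let ε_N = C/√N, ε_M = C/√M for a constant C > 0, let N, M ∈ ℕ with M = ⌈λN⌉ for λ > 0, and define ρ(λ) = C(1 + √λ)/((1 + λ)√N) + I·λ/(1+λ) for a constant I ≥ 0 (the distribution discrepancy). If I ≥ C/√N then ρ is minimized over λ ∈ [0, ∞) at λ = 0; if I < C/√N then inf_{λ ≥ 0} ρ(λ) is approached as λ → ∞ with limit I. -/

import Mathlib

/-!
Write `a = C / √N`. Over the common denominator `1 + λ`,
`ρ λ - a = (a √λ + (I - a) λ) / (1 + λ)` and `ρ λ - I = (a (1 + √λ) - I) / (1 + λ)`: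
the first numerator is nonnegative when `a ≤ I`, the second positive when `I < a`.
The limit holds because `(1 + √λ) / (1 + λ) → 0` and `λ / (1 + λ) → 1`.
-/

open Filter Topology Real

noncomputable def mixedBound (a I lam : ℝ) : ℝ :=
  a * ((1 + √lam) / (1 + lam)) + I * (lam / (1 + lam))

lemma mixedBound_zero (a I : ℝ) : mixedBound a I 0 = a := by
  simp [mixedBound]

lemma mixedBound_sub_left {lam : ℝ} (a I : ℝ) (hlam : 0 ≤ lam) :
    mixedBound a I lam - a = (a * √lam + (I - a) * lam) / (1 + lam) := by
  unfold mixedBound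
  field_simp
  ring

lemma mixedBound_sub_right {lam : ℝ} (a I : ℝ) (hlam : 0 ≤ lam) :
    mixedBound a I lam - I = (a * (1 + √lam) - I) / (1 + lam) := by
  unfold mixedBound
  field_simp
  ring

lemma mixedBound_zero_le {a I lam : ℝ} (ha : 0 ≤ a) (haI : a ≤ I) (hlam : 0 ≤ lam) :
    mixedBound a I 0 ≤ mixedBound a I lam := by
  rw [mixedBound_zero, ← sub_nonneg, mixedBound_sub_left a I hlam]
  exact div_nonneg (add_nonneg (mul_nonneg ha (sqrt_nonneg lam))
    (mul_nonneg (sub_nonneg.2 haI) hlam)) (by positivity)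

lemma lt_mixedBound {a I lam : ℝ} (ha : 0 ≤ a) (hIa : I < a) (hlam : 0 ≤ lam) :
    I < mixedBound a I lam := by
  rw [← sub_pos, mixedBound_sub_right a I hlam]
  have : I < a * (1 + √lam) := by nlinarith [mul_nonneg ha (sqrt_nonneg lam)]
  exact div_pos (sub_pos.2 this) (by positivity)

lemma one_add_sqrt_div_one_add_le {x : ℝ} (hx : 1 ≤ x) : (1 + √x) / (1 + x) ≤ 2 / √x := by
  have hs : 1 ≤ √x := one_le_sqrt.2 hx
  rw [div_le_div_iff₀ (by positivity) (by positivity)]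
  nlinarith [sq_sqrt (zero_le_one.trans hx)]

lemma tendsto_one_add_sqrt_div_one_add_atTop :
    Tendsto (fun x : ℝ => (1 + √x) / (1 + x)) atTop (𝓝 0) := by
  have h : Tendsto (fun x : ℝ => 2 / √x) atTop (𝓝 0) :=
    tendsto_const_nhds.div_atTop tendsto_sqrt_atTop
  refine tendsto_of_tendsto_of_tendsto_of_le_of_le' tendsto_const_nhds h ?_ ?_
  · filter_upwards [eventually_ge_atTop 0] with x hx
    positivity
  · filter_upwards [eventually_ge_atTop 1] with x hx
    exact one_add_sqrt_div_one_add_le hx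

lemma tendsto_div_one_add_atTop : Tendsto (fun x : ℝ => x / (1 + x)) atTop (𝓝 1) := by
  have h : Tendsto (fun x : ℝ => 1 - 1 / (1 + x)) atTop (𝓝 (1 - 0)) :=
    tendsto_const_nhds.sub <|
      tendsto_const_nhds.div_atTop (tendsto_atTop_add_const_left _ 1 tendsto_id)
  rw [sub_zero] at h
  refine h.congr' ?_
  filter_upwards [eventually_ge_atTop 0] with x hx
  field_simp
  ring

lemma tendsto_mixedBound_atTop (a I : ℝ) : Tendsto (mixedBound a I) atTop (𝓝 I) := by
  have h := (tendsto_one_add_sqrt_div_one_add_atTop.const_mul a).add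
    (tendsto_div_one_add_atTop.const_mul I)
  rwa [mul_zero, mul_one, zero_add] at h

theorem stmt13_general (C I : ℝ) (hC : 0 < C) (N : ℕ) :
    let ρ : ℝ → ℝ := fun lam =>
      C * (1 + Real.sqrt lam) / ((1 + lam) * Real.sqrt N) + I * lam / (1 + lam)
    ((C / Real.sqrt N ≤ I) → ∀ lam ≥ (0 : ℝ), ρ 0 ≤ ρ lam) ∧
      ((I < C / Real.sqrt N) →
        Filter.Tendsto ρ Filter.atTop (nhds I) ∧ ∀ lam ≥ (0 : ℝ), I < ρ lam) := by
  intro ρ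
  have hρ : ρ = mixedBound (C / √N) I := by
    funext lam
    simp only [ρ, mixedBound]
    rw [mul_comm (1 + lam), ← div_mul_div_comm, mul_div_assoc]
  have ha : 0 ≤ C / √N := by positivity
  rw [hρ]
  exact ⟨fun h lam hlam => mixedBound_zero_le ha h hlam,
    fun h => ⟨tendsto_mixedBound_atTop _ _, fun lam hlam => lt_mixedBound ha h hlam⟩⟩

/-- Degenerate optimum of the traditional mixed-data bound: if the discrepancy
`I` is at least `C/√N` then `ρ` is minimized at `λ = 0`; otherwise the infimum
`I` is only approached as `λ → ∞`. -/
theorem stmt13 (C I : ℝ) (hC : 0 < C) (hI : 0 ≤ I) (N : ℕ) (hN : 0 < N) :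
    let ρ : ℝ → ℝ := fun lam =>
      C * (1 + Real.sqrt lam) / ((1 + lam) * Real.sqrt N) + I * lam / (1 + lam)
    ((C / Real.sqrt N ≤ I) → ∀ lam ≥ (0 : ℝ), ρ 0 ≤ ρ lam) ∧
      ((I < C / Real.sqrt N) →
        Filter.Tendsto ρ Filter.atTop (nhds I) ∧ ∀ lam ≥ (0 : ℝ), I < ρ lam) :=
  stmt13_general C I hC N
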